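/- arXiv:2109.02181 — 4 statements merged into one kernel-verified Lean document; each statement's English description precedes it below -/
import Mathlib

section
/- Let H and F be graphs with |V(H)| ≥ |V(F)| such that H does not contain F as a subgraph. Then ex_re(n,H,F) = Θ(n^{|V(H)|}), i.e. there exist constants c, C > 0 such that for all sufficiently large n, c·n^{|V(H)|} ≤ ex_re(n,H,F) ≤ C·n^{|V(H)|}. -/
/-!
Every copy of `H` in an `n`-vertex graph is the image of an injective map `V(H) → [n]`, so there
are at most `n ^ |V(H)|` of them. Conversely, blow up `H` by replacing each vertex with an
independent class of at least `n / |V(H)|` vertices. Every transversal spans a copy of `H`, and a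
copy of `F` aligning with it has at most as many vertices, so lies inside it; the projection onto
`H` is then injective on that copy and would produce a copy of `F` in `H`.
-/

open SimpleGraph

/-- `A` is a copy of `H`: the subgraph `A` of its ambient graph is isomorphic to `H`. -/
def SimpleGraph.Subgraph.IsCopyOf {V W : Type*} {G : SimpleGraph V} (A : G.Subgraph)
    (H : SimpleGraph W) : Prop :=
  Nonempty (A.coe ≃g H)

/-- Two subgraphs of `G` align if the vertex set of one contains that of the other. -/
def SimpleGraph.Subgraph.Aligns {V : Type*} {G : SimpleGraph V} (A B : G.Subgraph) : Prop :=
  A.verts ⊆ B.verts ∨ B.verts ⊆ A.verts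

/-- A subgraph is nice (w.r.t. `F`) if it aligns with no copy of `F`. -/
def SimpleGraph.Subgraph.Nice {V W : Type*} {G : SimpleGraph V} (A : G.Subgraph)
    (F : SimpleGraph W) : Prop :=
  ∀ B : G.Subgraph, B.IsCopyOf F → ¬ A.Aligns B

/-- `N(H,G)`: the number of copies of `H` in `G`. -/
noncomputable def copyCount {V W : Type*} (H : SimpleGraph W) (G : SimpleGraph V) : ℕ :=
  Nat.card {A : G.Subgraph // A.IsCopyOf H}

/-- `N_re(H,F,G)`: the number of copies of `H` in `G` that align with no copy of `F`. -/
noncomputable def niceCopyCount {V W U : Type*} (H : SimpleGraph W) (F : SimpleGraph U)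
    (G : SimpleGraph V) : ℕ :=
  Nat.card {A : G.Subgraph // A.IsCopyOf H ∧ A.Nice F}

/-- `G` is `F`-free: `G` contains no copy of `F`. -/
def FreeOf {V W : Type*} (F : SimpleGraph W) (G : SimpleGraph V) : Prop :=
  ¬ ∃ A : G.Subgraph, A.IsCopyOf F

/-- `ex_re(n,H,F)`: the maximum of `N_re(H,F,G)` over `n`-vertex graphs `G`. -/
noncomputable def exRe {W U : Type*} (n : ℕ) (H : SimpleGraph W) (F : SimpleGraph U) : ℕ :=
  sSup {N | ∃ G : SimpleGraph (Fin n), N = niceCopyCount H F G}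

/-- `ex(n,H,F)`: the maximum number of copies of `H` in an `n`-vertex `F`-free graph. -/
noncomputable def exGen {W U : Type*} (n : ℕ) (H : SimpleGraph W) (F : SimpleGraph U) : ℕ :=
  sSup {N | ∃ G : SimpleGraph (Fin n), FreeOf F G ∧ N = copyCount H G}

lemma freeOf_iff_free {V W : Type*} {F : SimpleGraph W} {G : SimpleGraph V} :
    FreeOf F G ↔ F.Free G := by
  simp only [FreeOf, Free, isContained_iff_exists_iso_subgraph, Subgraph.IsCopyOf]
  exact not_congr <| exists_congr fun _ => ⟨fun ⟨e⟩ => ⟨e.symm⟩, fun ⟨e⟩ => ⟨e.symm⟩⟩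

lemma Subgraph.IsCopyOf.ncard_verts {V W : Type*} [Fintype W] {G : SimpleGraph V}
    {A : G.Subgraph} {H : SimpleGraph W} (h : A.IsCopyOf H) :
    A.verts.ncard = Fintype.card W := by
  obtain ⟨e⟩ := h
  rw [← Nat.card_coe_set_eq, Nat.card_congr e.toEquiv, Nat.card_eq_fintype_card]

lemma Subgraph.Aligns.verts_subset_of_ncard_le {V : Type*} [Finite V] {G : SimpleGraph V}
    {A B : G.Subgraph} (h : A.Aligns B) (hcard : B.verts.ncard ≤ A.verts.ncard) :
    B.verts ⊆ A.verts := by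
  rcases h with h | h
  · exact (Set.eq_of_subset_of_ncard_le h hcard).ge
  · exact h

section Counting

variable {V W U : Type*} [Fintype V] (H : SimpleGraph W) (F : SimpleGraph U)

lemma niceCopyCount_le_copyCount (G : SimpleGraph V) :
    niceCopyCount H F G ≤ _root_.copyCount H G :=
  Nat.card_le_card_of_injective
    (fun A : {A : G.Subgraph // A.IsCopyOf H ∧ A.Nice F} =>
      (⟨A.1, A.2.1⟩ : {A : G.Subgraph // A.IsCopyOf H}))
    fun _ _ h => Subtype.ext (congrArg (fun A : {A : G.Subgraph // A.IsCopyOf H} => A.1) h)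

variable [Fintype W]

lemma copyCount_le_card_pow (G : SimpleGraph V) :
    _root_.copyCount H G ≤ Fintype.card V ^ Fintype.card W := by
  have : Finite (H.Copy G) := Finite.of_injective _ DFunLike.coe_injective
  have hsurj : Function.Surjective fun f : H.Copy G =>
      (⟨f.toSubgraph, ⟨f.isoToSubgraph.symm⟩⟩ : {A : G.Subgraph // A.IsCopyOf H}) := by
    rintro ⟨A, ⟨e⟩⟩
    obtain ⟨f, hf⟩ : A ∈ Set.range (Copy.toSubgraph (A := H)) := by
      rw [Copy.range_toSubgraph]; exact ⟨e.symm⟩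
    exact ⟨f, Subtype.ext hf⟩
  calc _root_.copyCount H G ≤ Nat.card (H.Copy G) := Nat.card_le_card_of_surjective _ hsurj
    _ ≤ Nat.card (W → V) := Nat.card_le_card_of_injective _ DFunLike.coe_injective
    _ = Fintype.card V ^ Fintype.card W := by simp [Nat.card_fun]

lemma niceCopyCount_le_card_pow (G : SimpleGraph V) :
    niceCopyCount H F G ≤ Fintype.card V ^ Fintype.card W :=
  (niceCopyCount_le_copyCount H F G).trans (copyCount_le_card_pow H G)

lemma exRe_le_pow (n : ℕ) : exRe n H F ≤ n ^ Fintype.card W :=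
  csSup_le ⟨_, ⊥, rfl⟩ <| by
    rintro _ ⟨G, rfl⟩
    simpa using niceCopyCount_le_card_pow H F G

lemma niceCopyCount_le_exRe {n : ℕ} (G : SimpleGraph (Fin n)) :
    niceCopyCount H F G ≤ exRe n H F :=
  le_csSup ⟨n ^ Fintype.card W, by rintro _ ⟨G, rfl⟩; simpa using niceCopyCount_le_card_pow H F G⟩
    ⟨G, rfl⟩

end Counting

section BlowUp

variable {V α β : Type*} {H : SimpleGraph α} {F : SimpleGraph β} (f : V → α)

lemma comp_section_eq_id (g : ∀ a, {v // f v = a}) : f ∘ (fun a => (g a : V)) = id :=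
  funext fun a => (g a).2

lemma injective_section (g : ∀ a, {v // f v = a}) : Function.Injective fun a => (g a : V) :=
  (comp_section_eq_id f g ▸ Function.injective_id).of_comp

lemma injOn_range_section (g : ∀ a, {v // f v = a}) :
    Set.InjOn f (Set.range fun a => (g a : V)) :=
  (comp_section_eq_id f g ▸ Function.injective_id).injOn_range

lemma section_eq_of_range_eq {g g' : ∀ a, {v // f v = a}}
    (h : (Set.range fun a => (g a : V)) = Set.range fun a => (g' a : V)) : g = g' := by
  funext a
  obtain ⟨b, hb⟩ : (g a : V) ∈ Set.range fun a => (g' a : V) := h ▸ Set.mem_range_self a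
  have hba : b = a := by simpa only [(g' b).2, (g a).2] using congrArg f hb
  exact Subtype.ext (hba ▸ hb.symm)

def sectionEmbedding (g : ∀ a, {v // f v = a}) : H ↪g H.comap f where
  toFun a := g a
  inj' := injective_section f g
  map_rel_iff' {a b} := by
    change H.Adj (f (g a)) (f (g b)) ↔ _
    rw [(g a).2, (g b).2]

lemma verts_toSubgraph_sectionEmbedding (g : ∀ a, {v // f v = a}) :
    (sectionEmbedding (H := H) f g).toCopy.toSubgraph.verts = Set.range fun a => (g a : V) := by
  simp [sectionEmbedding, Set.image_univ]

lemma isContained_of_injOn (B : (H.comap f).Subgraph) (hB : Set.InjOn f B.verts) : B.coe ⊑ H :=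
  ⟨⟨⟨fun v => f v, fun huv => B.adj_sub huv⟩, fun u v huv => Subtype.ext (hB u.2 v.2 huv)⟩⟩

variable [Fintype α] [Fintype β]

lemma nice_toSubgraph_sectionEmbedding [Finite V] (hcard : Fintype.card β ≤ Fintype.card α)
    (hfree : F.Free H) (g : ∀ a, {v // f v = a}) :
    (sectionEmbedding (H := H) f g).toCopy.toSubgraph.Nice F := by
  intro B hB hal
  have hverts := verts_toSubgraph_sectionEmbedding (H := H) f g
  have hsub : B.verts ⊆ Set.range fun a => (g a : V) := by
    refine hverts ▸ Subgraph.Aligns.verts_subset_of_ncard_le hal ?_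
    rw [Subgraph.IsCopyOf.ncard_verts hB, hverts,
      Set.ncard_range_of_injective (injective_section f g), Nat.card_eq_fintype_card]
    exact hcard
  obtain ⟨e⟩ := hB
  exact hfree <| e.isContained'.trans <|
    isContained_of_injOn f B ((injOn_range_section f g).mono hsub)

lemma prod_card_fiber_le_niceCopyCount [Fintype V] (hcard : Fintype.card β ≤ Fintype.card α)
    (hfree : F.Free H) : ∏ a, Nat.card {v // f v = a} ≤ niceCopyCount H F (H.comap f) := by
  rw [← Nat.card_pi]
  refine Nat.card_le_card_of_injective (fun g => ⟨(sectionEmbedding f g).toCopy.toSubgraph,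
    ⟨(Copy.isoToSubgraph _).symm⟩, nice_toSubgraph_sectionEmbedding f hcard hfree g⟩) ?_
  intro g g' hgg'
  apply section_eq_of_range_eq f
  rw [← verts_toSubgraph_sectionEmbedding (H := H), ← verts_toSubgraph_sectionEmbedding (H := H)]
  exact congrArg (fun A => A.1.verts) hgg'

end BlowUp

lemma div_le_card_mod_eq {n h r : ℕ} (hr : r < h) :
    n / h ≤ Nat.card {v : Fin n // (v : ℕ) % h = r} := by
  have hlt (i : Fin (n / h)) : r + i * h < n := by
    have := Nat.div_mul_le_self n h
    nlinarith [i.2]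
  let emb : Fin (n / h) → {v : Fin n // (v : ℕ) % h = r} :=
    fun i => ⟨⟨r + i * h, hlt i⟩, by simp [Nat.mod_eq_of_lt hr]⟩
  have hemb : Function.Injective emb := by
    intro i j hij
    simp only [emb, Subtype.mk.injEq, Fin.mk.injEq, add_right_inj] at hij
    exact Fin.ext (Nat.eq_of_mul_eq_mul_right (by omega) hij)
  simpa using Nat.card_le_card_of_injective emb hemb

lemma exists_div_le_card_fiber (α : Type*) [Fintype α] [Nonempty α] (n : ℕ) :
    ∃ f : Fin n → α, ∀ a, n / Fintype.card α ≤ Nat.card {v // f v = a} := by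
  let e := Fintype.equivFin α
  refine ⟨fun v => e.symm ⟨v % Fintype.card α, Nat.mod_lt _ Fintype.card_pos⟩, fun a => ?_⟩
  refine (div_le_card_mod_eq (e a).2).trans (Nat.card_congr (Equiv.subtypeEquivRight ?_)).le
  intro v
  rw [Equiv.symm_apply_eq, Fin.ext_iff]

lemma div_pow_le_exRe {α β : Type*} [Fintype α] [Fintype β] [Nonempty α] (H : SimpleGraph α)
    (F : SimpleGraph β) (hcard : Fintype.card β ≤ Fintype.card α) (hfree : F.Free H) (n : ℕ) :
    (n / Fintype.card α) ^ Fintype.card α ≤ exRe n H F := by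
  obtain ⟨f, hf⟩ := exists_div_le_card_fiber α n
  calc (n / Fintype.card α) ^ Fintype.card α = ∏ _a : α, n / Fintype.card α := by simp
    _ ≤ ∏ a, Nat.card {v // f v = a} := Finset.prod_le_prod' fun a _ => hf a
    _ ≤ niceCopyCount H F (H.comap f) := prod_card_fiber_le_niceCopyCount f hcard hfree
    _ ≤ exRe n H F := niceCopyCount_le_exRe H F _

lemma cast_div_two_mul_le_div {n h : ℕ} (hn : h ≤ n) : (n : ℝ) / (2 * h) ≤ (n / h : ℕ) := by
  rcases Nat.eq_zero_or_pos h with rfl | hh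
  · simp
  have : n ≤ n / h * (2 * h) := by
    have := Nat.div_add_mod n h
    have := Nat.mod_lt n hh
    have := Nat.div_pos hn hh
    nlinarith
  rw [div_le_iff₀ (by positivity)]
  exact_mod_cast this

/-- If `|V(H)| ≥ |V(F)|` and `H` does not contain `F`, then
`ex_re(n,H,F) = Θ(n^{|V(H)|})`. -/
theorem exRe_theta_of_free {α β : Type*} [Fintype α] [Fintype β]
    (H : SimpleGraph α) (F : SimpleGraph β)
    (hcard : Fintype.card β ≤ Fintype.card α)
    (hfree : FreeOf F H) :
    ∃ c C : ℝ, 0 < c ∧ 0 < C ∧ ∃ N : ℕ, ∀ n : ℕ, N ≤ n →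
      c * (n : ℝ) ^ (Fintype.card α) ≤ (exRe n H F : ℝ) ∧
      (exRe n H F : ℝ) ≤ C * (n : ℝ) ^ (Fintype.card α) := by
  rw [freeOf_iff_free] at hfree
  have : Nonempty β := not_isEmpty_iff.mp fun _ => hfree IsContained.of_isEmpty
  have : Nonempty α := Fintype.card_pos_iff.mp (Fintype.card_pos.trans_le hcard)
  set h := Fintype.card α
  refine ⟨(1 / (2 * h)) ^ h, 1, by positivity, one_pos, h, fun n hn => ⟨?_, ?_⟩⟩
  · calc (1 / (2 * h)) ^ h * (n : ℝ) ^ h = ((n : ℝ) / (2 * h)) ^ h := by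
          rw [← mul_pow, one_div_mul_eq_div]
      _ ≤ ((n / h : ℕ) : ℝ) ^ h := by gcongr; exact cast_div_two_mul_le_div hn
      _ ≤ exRe n H F := by exact_mod_cast div_pow_le_exRe H F hcard hfree n
  · simpa using (Nat.cast_le (α := ℝ)).mpr (exRe_le_pow H F n)
end

section
/- Let H_1,…,H_ℓ and H'_1,…,H'_m be complete multipartite graphs, let k_1,…,k_ℓ be positive integers, and let α_1,…,α_ℓ ≥ 0 and β_1,…,β_m ≥ 0 be real weights. For an n-vertex graph G define x(G) = Σ_{i=1}^{ℓ} α_i · N_re(H_i, K_{k_i+1}, G) + Σ_{j=1}^{m} β_j · N(H'_j, G). Then for every n, the maximum of x(G) over n-vertex graphs G is attained by a complete multipartite graph T. -/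
open SimpleGraph

/-- `G` is complete multipartite: non-adjacency is transitive, i.e. the vertex set is
partitioned into classes of mutually non-adjacent vertices, with vertices of
different classes adjacent. -/
def IsCompleteMultipartite {V : Type*} (G : SimpleGraph V) : Prop :=
  ∀ u v w : V, ¬ G.Adj u v → ¬ G.Adj v w → ¬ G.Adj u w

/-!
Zykov symmetrization. For non-adjacent `u ≠ v`, let `G_{u→v}` be `G` with `u` replaced by a twin
of `v`. A copy of a complete multipartite graph avoiding `u`, or containing both `u` and `v` (which
then lie in one part), survives unchanged in `G_{u→v}`; a copy containing `v` but not `u` survives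
as well and, moved along the transposition `(u v)`, yields a second copy through `u`. Counting
the same way in `G_{v→u}`, every copy of `G` is accounted for twice, so
`2 x(G) ≤ x(G_{u→v}) + x(G_{v→u})`; the alignment condition is preserved because cliques of
`G_{u→v}` are images of cliques of `G`. Hence the maximizers of `x` are closed under
symmetrization, and one of them with the most edges is complete multipartite.
-/

open Function

section

variable {V : Type*} [DecidableEq V] {u v x : V}

lemma update_id_swap_of_ne (hx : x ≠ u) : update id u v (Equiv.swap u v x) = x := by
  rcases eq_or_ne x v with rfl | hxv
  · simp
  · simp [Equiv.swap_apply_of_ne_of_ne hx hxv, update_of_ne hx]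

end

lemma Nat.card_subtype_eq_card_and_add_card_and_not {α : Type*} [Finite α] (P q : α → Prop) :
    Nat.card {x // P x} = Nat.card {x // P x ∧ q x} + Nat.card {x // P x ∧ ¬ q x} := by
  classical
  rw [← Nat.card_sum]
  exact Nat.card_congr <| (Equiv.sumCompl fun x : {x // P x} => q x).symm.trans <|
    (Equiv.subtypeSubtypeEquivSubtypeInter P q).sumCongr
      (Equiv.subtypeSubtypeEquivSubtypeInter P (¬ q ·))

theorem IsCompleteMultipartite.of_iso {V W : Type*} {G : SimpleGraph V} {H : SimpleGraph W}
    (e : G ≃g H) (hH : _root_.IsCompleteMultipartite H) : _root_.IsCompleteMultipartite G :=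
  fun a b c hab hbc hac =>
    hH (e a) (e b) (e c) (mt e.map_adj_iff.mp hab) (mt e.map_adj_iff.mp hbc) (e.map_adj_iff.mpr hac)

namespace SimpleGraph

section

variable {V W : Type*}

/-- Zykov symmetrization: `u` is replaced by a twin of `v`, i.e. its neighbourhood becomes that
of `v`. -/
def zykovSym [DecidableEq V] (G : SimpleGraph V) (u v : V) : SimpleGraph V :=
  G.comap (update id u v)

section ZykovSym

variable [DecidableEq V] {G : SimpleGraph V} {u v x y : V}

lemma zykovSym_adj : (G.zykovSym u v).Adj x y ↔ G.Adj (update id u v x) (update id u v y) :=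
  Iff.rfl

lemma zykovSym_adj_of_ne (hx : x ≠ u) (hy : y ≠ u) :
    (G.zykovSym u v).Adj x y ↔ G.Adj x y := by
  simp [zykovSym_adj, update_of_ne hx, update_of_ne hy]

lemma zykovSym_adj_left (hy : y ≠ u) : (G.zykovSym u v).Adj u y ↔ G.Adj v y := by
  simp [zykovSym_adj, update_of_ne hy]

lemma not_zykovSym_adj : ¬ (G.zykovSym u v).Adj u v := by
  by_cases h : v = u <;> simp [zykovSym_adj, h]

end ZykovSym

lemma IsClique.image_of_comap {G : SimpleGraph W} {f : V → W} {X : Set V}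
    (hX : (G.comap f).IsClique X) : G.IsClique (f '' X) ∧ Set.InjOn f X := by
  refine ⟨?_, fun x hx y hy hxy => by_contra fun hne => G.ne_of_adj (hX hx hy hne) hxy⟩
  rintro _ ⟨x, hx, rfl⟩ _ ⟨y, hy, rfl⟩ hne
  exact hX hx hy fun h => hne (h ▸ rfl)

namespace Subgraph

variable {G : SimpleGraph V} {G' : SimpleGraph W}

def transfer (σ : V ≃ W) (A : G.Subgraph)
    (h : ∀ ⦃x y⦄, A.Adj x y → G'.Adj (σ x) (σ y)) : G'.Subgraph where
  verts := σ '' A.verts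
  Adj x y := A.Adj (σ.symm x) (σ.symm y)
  adj_sub hxy := by simpa using h hxy
  edge_vert hxy := ⟨_, A.edge_vert hxy, σ.apply_symm_apply _⟩
  symm := ⟨fun _ _ hxy => A.adj_symm hxy⟩

variable {σ : V ≃ W} {A : G.Subgraph} {h : ∀ ⦃x y⦄, A.Adj x y → G'.Adj (σ x) (σ y)}

@[simp] lemma transfer_verts : (A.transfer σ h).verts = σ '' A.verts := rfl

lemma transfer_adj {x y : W} : (A.transfer σ h).Adj x y ↔ A.Adj (σ.symm x) (σ.symm y) :=
  Iff.rfl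

def transferIso : A.coe ≃g (A.transfer σ h).coe where
  toEquiv := σ.image A.verts
  map_rel_iff' {a b} := by
    change A.Adj (σ.symm (σ a)) (σ.symm (σ b)) ↔ A.Adj a b
    simp

lemma IsCopyOf.transfer {U : Type*} {H : SimpleGraph U} (hA : A.IsCopyOf H) :
    (A.transfer σ h).IsCopyOf H :=
  hA.map transferIso.symm.trans

lemma transfer_injective {B : G.Subgraph} {h' : ∀ ⦃x y⦄, B.Adj x y → G'.Adj (σ x) (σ y)}
    (hAB : A.transfer σ h = B.transfer σ h') : A = B := by
  ext x y
  · simpa using congrArg (σ x ∈ ·.verts) hAB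
  · simpa [transfer_adj] using congrArg (·.Adj (σ x) (σ y)) hAB

lemma card_le_card_of_transfer [Finite W] (σ : V ≃ W) {P : G.Subgraph → Prop}
    {P' : G'.Subgraph → Prop}
    (h : ∀ A, P A → ∀ ⦃x y⦄, A.Adj x y → G'.Adj (σ x) (σ y))
    (hP : ∀ A (hA : P A), P' (A.transfer σ (h A hA))) :
    Nat.card {A // P A} ≤ Nat.card {A' // P' A'} :=
  Nat.card_le_card_of_injective (fun A => ⟨_, hP A.1 A.2⟩)
    fun A B hAB => Subtype.ext <| transfer_injective (h := h A.1 A.2) (h' := h B.1 B.2)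
      (congrArg Subtype.val hAB)

variable {r : ℕ} {B : G.Subgraph}

lemma IsCopyOf.isClique_verts (hB : B.IsCopyOf (completeGraph (Fin r))) :
    G.IsClique B.verts := by
  obtain ⟨e⟩ := hB
  intro x hx y hy hxy
  have : (completeGraph (Fin r)).Adj (e ⟨x, hx⟩) (e ⟨y, hy⟩) :=
    e.injective.ne fun h => hxy (congrArg Subtype.val h)
  exact B.adj_sub (e.map_rel_iff.mp this)

lemma IsCopyOf.ncard_verts (hB : B.IsCopyOf (completeGraph (Fin r))) : B.verts.ncard = r := by
  obtain ⟨e⟩ := hB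
  simpa using Nat.card_congr e.toEquiv

lemma exists_isCopyOf_completeGraph_verts_eq [Finite V] {X : Set V} (hX : G.IsClique X) :
    ∃ B : G.Subgraph, B.IsCopyOf (completeGraph (Fin X.ncard)) ∧ B.verts = X := by
  refine ⟨(⊤ : G.Subgraph).induce X,
    ⟨{ toEquiv := Finite.equivFinOfCardEq rfl, map_rel_iff' := ?_ }⟩, rfl⟩
  intro a b
  simp only [completeGraph_eq_top, SimpleGraph.top_adj, ne_eq, EmbeddingLike.apply_eq_iff_eq,
    coe_adj, induce_adj]
  exact ⟨fun h => ⟨a.2, b.2, hX a.2 b.2 fun h' => h (Subtype.ext h')⟩,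
    fun h h' => h.2.2.ne (congrArg Subtype.val h')⟩

end Subgraph

end

namespace Subgraph

variable {V U : Type*} {G : SimpleGraph V} {A : G.Subgraph} {u v x y : V}

lemma IsCopyOf.isCompleteMultipartite_coe {H : SimpleGraph U} (hA : A.IsCopyOf H)
    (hH : _root_.IsCompleteMultipartite H) : _root_.IsCompleteMultipartite A.coe :=
  hA.elim fun e => hH.of_iso e

lemma adj_of_adj_of_not_adj (hA : _root_.IsCompleteMultipartite A.coe) (hv : v ∈ A.verts)
    (huv : ¬ A.Adj u v) (huy : A.Adj u y) : A.Adj v y :=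
  by_contra fun hvy =>
    hA ⟨u, A.edge_vert huy⟩ ⟨v, hv⟩ ⟨y, A.edge_vert huy.symm⟩ huv hvy huy

variable [DecidableEq V]

/-- If `A` contains both `u` and `v`, they lie in one part of `A` and so have the same
neighbours in `A`. -/
lemma adj_zykovSym_of_adj (hA : _root_.IsCompleteMultipartite A.coe) (hadj : ¬ G.Adj u v)
    (hAuv : u ∈ A.verts → v ∈ A.verts) (hxy : A.Adj x y) : (G.zykovSym u v).Adj x y := by
  have hA' : ∀ {y}, A.Adj u y → A.Adj v y := fun huy =>
    adj_of_adj_of_not_adj hA (hAuv (A.edge_vert huy)) (fun h => hadj (A.adj_sub h)) huy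
  apply A.adj_sub
  rcases eq_or_ne x u with rfl | hxu
  · simpa [update_of_ne hxy.ne.symm] using hA' hxy
  rcases eq_or_ne y u with rfl | hyu
  · simpa [update_of_ne hxu] using (hA' hxy.symm).symm
  · simpa [update_of_ne hxu, update_of_ne hyu] using hxy

lemma adj_zykovSym_swap_of_adj (hu : u ∉ A.verts) (hxy : A.Adj x y) :
    (G.zykovSym u v).Adj (Equiv.swap u v x) (Equiv.swap u v y) := by
  rw [zykovSym_adj, update_id_swap_of_ne (ne_of_mem_of_not_mem (A.edge_vert hxy) hu),
    update_id_swap_of_ne (ne_of_mem_of_not_mem (A.edge_vert hxy.symm) hu)]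
  exact A.adj_sub hxy

variable [Finite V] {r : ℕ}

/-- Cliques of `G.zykovSym u v` map to cliques of `G` of the same size under `update id u v`. -/
lemma Nice.zykovSym (hA : A.Nice (completeGraph (Fin r))) {A' : (G.zykovSym u v).Subgraph}
    (h : ∀ X, (G.zykovSym u v).IsClique X →
      (A'.verts ⊆ X → A.verts ⊆ update id u v '' X) ∧
        (X ⊆ A'.verts → update id u v '' X ⊆ A.verts)) :
    A'.Nice (completeGraph (Fin r)) := by
  intro B' hB' hal
  obtain ⟨hcl, hinj⟩ := hB'.isClique_verts.image_of_comap
  obtain ⟨B, hB, hBv⟩ := exists_isCopyOf_completeGraph_verts_eq hcl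
  rw [hinj.ncard_image, hB'.ncard_verts] at hB
  have h' := h _ hB'.isClique_verts
  exact hA B hB (by rw [Aligns, hBv]; exact hal.imp h'.1 h'.2)

lemma Nice.transfer_refl (hA : A.Nice (completeGraph (Fin r))) (huv : u ≠ v)
    (hAuv : u ∈ A.verts → v ∈ A.verts)
    (h : ∀ ⦃x y⦄, A.Adj x y → (G.zykovSym u v).Adj (Equiv.refl V x) (Equiv.refl V y)) :
    (A.transfer (Equiv.refl V) h).Nice (completeGraph (Fin r)) := by
  refine hA.zykovSym fun X hX => ?_
  have hX' : u ∈ X → v ∉ X := fun hu hv => not_zykovSym_adj (hX hu hv huv)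
  simp only [transfer_verts, Equiv.coe_refl, Set.image_id]
  constructor
  · intro hAX a ha
    rcases eq_or_ne a u with rfl | hau
    · exact absurd (hAX (hAuv ha)) (hX' (hAX ha))
    · exact ⟨a, hAX ha, by simp [update_of_ne hau]⟩
  · rintro hXA _ ⟨x, hx, rfl⟩
    rcases eq_or_ne x u with rfl | hxu
    · simpa using hAuv (hXA hx)
    · simpa [update_of_ne hxu] using hXA hx

lemma Nice.transfer_swap (hA : A.Nice (completeGraph (Fin r))) (hu : u ∉ A.verts)
    (h : ∀ ⦃x y⦄, A.Adj x y → (G.zykovSym u v).Adj (Equiv.swap u v x) (Equiv.swap u v y)) :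
    (A.transfer (Equiv.swap u v) h).Nice (completeGraph (Fin r)) := by
  refine hA.zykovSym fun X _ => ⟨fun hAX a ha => ?_, ?_⟩
  · exact ⟨_, hAX ⟨a, ha, rfl⟩, update_id_swap_of_ne (ne_of_mem_of_not_mem ha hu)⟩
  · rintro hXA _ ⟨x, hx, rfl⟩
    obtain ⟨a, ha, rfl⟩ := hXA hx
    rwa [update_id_swap_of_ne (ne_of_mem_of_not_mem ha hu)]

end Subgraph

section

open Subgraph

variable {V U : Type*} [DecidableEq V] [Finite V] {G : SimpleGraph V} {u v : V} {r : ℕ}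
  {H : SimpleGraph U}

theorem card_add_card_le_niceCopyCount_zykovSym (hH : _root_.IsCompleteMultipartite H)
    (huv : u ≠ v) (hadj : ¬ G.Adj u v) :
    Nat.card {A : G.Subgraph // (A.IsCopyOf H ∧ A.Nice (completeGraph (Fin r))) ∧
        ¬ (u ∈ A.verts ∧ v ∉ A.verts)} +
      Nat.card {A : G.Subgraph // (A.IsCopyOf H ∧ A.Nice (completeGraph (Fin r))) ∧
        (v ∈ A.verts ∧ u ∉ A.verts)} ≤
      niceCopyCount H (completeGraph (Fin r)) (G.zykovSym u v) := by
  rw [niceCopyCount, Nat.card_subtype_eq_card_and_add_card_and_not _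
    fun A : (G.zykovSym u v).Subgraph => ¬ (u ∈ A.verts ∧ v ∉ A.verts)]
  refine add_le_add ?_ ?_
  · refine card_le_card_of_transfer (Equiv.refl V)
      (fun A hA ⦃_ _⦄ => adj_zykovSym_of_adj (hA.1.1.isCompleteMultipartite_coe hH) hadj
        (not_and_not_right.mp hA.2))
      fun A hA =>
        ⟨⟨hA.1.1.transfer, hA.1.2.transfer_refl huv (not_and_not_right.mp hA.2) _⟩, ?_⟩
    change ¬ (u ∈ Equiv.refl V '' A.verts ∧ v ∉ Equiv.refl V '' A.verts)
    simpa only [Equiv.coe_refl, Set.image_id] using hA.2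
  · refine card_le_card_of_transfer (Equiv.swap u v)
      (fun A hA ⦃_ _⦄ => adj_zykovSym_swap_of_adj hA.2.2)
      fun A hA => ⟨⟨hA.1.1.transfer, hA.1.2.transfer_swap hA.2.2 _⟩, ?_⟩
    simpa [Set.mem_image_equiv, Equiv.symm_swap] using hA.2

theorem two_mul_niceCopyCount_le (hH : _root_.IsCompleteMultipartite H) (huv : u ≠ v)
    (hadj : ¬ G.Adj u v) :
    2 * niceCopyCount H (completeGraph (Fin r)) G ≤
      niceCopyCount H (completeGraph (Fin r)) (G.zykovSym u v) +
        niceCopyCount H (completeGraph (Fin r)) (G.zykovSym v u) := by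
  have h₁ := card_add_card_le_niceCopyCount_zykovSym (r := r) hH huv hadj
  have h₂ := card_add_card_le_niceCopyCount_zykovSym (r := r) hH huv.symm (mt G.adj_symm hadj)
  have e₁ := Nat.card_subtype_eq_card_and_add_card_and_not
    (fun A : G.Subgraph => A.IsCopyOf H ∧ A.Nice (completeGraph (Fin r)))
    (fun A => u ∈ A.verts ∧ v ∉ A.verts)
  have e₂ := Nat.card_subtype_eq_card_and_add_card_and_not
    (fun A : G.Subgraph => A.IsCopyOf H ∧ A.Nice (completeGraph (Fin r)))
    (fun A => v ∈ A.verts ∧ u ∉ A.verts)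
  rw [niceCopyCount]
  omega

omit [DecidableEq V] in
/-- `G` has no copy of `K_{|V|+1}`, so niceness with respect to it is vacuous. -/
lemma copyCount_eq_niceCopyCount (H : SimpleGraph U) (G : SimpleGraph V) :
    _root_.copyCount H G = niceCopyCount H (completeGraph (Fin (Nat.card V + 1))) G :=
  Nat.card_congr <| Equiv.subtypeEquivRight fun _ => (and_iff_left fun B hB _ => by
    have := hB.ncard_verts ▸ B.verts.ncard_le_card
    omega).symm

end

open Finset

section Degree

variable {V : Type*} [Fintype V] [DecidableEq V] {G : SimpleGraph V} {u v x : V}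

open scoped Classical

lemma degree_eq_ite_add_sum_erase (K : SimpleGraph V) (x u : V) :
    K.degree x =
      (if K.Adj x u then 1 else 0) + ∑ y ∈ univ.erase u, if K.Adj x y then 1 else 0 := by
  rw [← card_neighborFinset_eq_degree, neighborFinset_eq_filter, card_filter,
    add_sum_erase _ (fun y => if K.Adj x y then 1 else 0) (mem_univ u)]

lemma degree_zykovSym_add (hx : x ≠ u) :
    (G.zykovSym u v).degree x + (if G.Adj x u then 1 else 0) =
      G.degree x + (if G.Adj x v then 1 else 0) := by
  have hxu : (G.zykovSym u v).Adj x u ↔ G.Adj x v := by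
    rw [adj_comm, zykovSym_adj_left hx, adj_comm]
  rw [degree_eq_ite_add_sum_erase _ x u, degree_eq_ite_add_sum_erase G x u, if_congr hxu rfl rfl,
    sum_congr rfl fun y hy => if_congr (zykovSym_adj_of_ne hx (ne_of_mem_erase hy)) rfl rfl]
  ring

lemma degree_zykovSym_self (hadj : ¬ G.Adj u v) : (G.zykovSym u v).degree u = G.degree v := by
  rw [← card_neighborFinset_eq_degree, ← card_neighborFinset_eq_degree]
  congr 1
  ext y
  rcases eq_or_ne y u with rfl | hyu
  · simpa using fun h => hadj h.symm
  · simpa using zykovSym_adj_left hyu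

theorem card_edgeFinset_zykovSym_add (hadj : ¬ G.Adj u v) :
    #(G.zykovSym u v).edgeFinset + G.degree u = #G.edgeFinset + G.degree v := by
  have hsum := sum_congr (s₁ := univ.erase u) rfl fun x hx =>
    degree_zykovSym_add (G := G) (v := v) (ne_of_mem_erase hx)
  rw [sum_add_distrib, sum_add_distrib] at hsum
  have hu : ∑ x ∈ univ.erase u, (if G.Adj x u then 1 else 0) = G.degree u := by
    simp_rw [G.adj_comm _ u]
    simp [degree_eq_ite_add_sum_erase G u u]
  have hv : ∑ x ∈ univ.erase u, (if G.Adj x v then 1 else 0) = G.degree v := by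
    simp_rw [G.adj_comm _ v]
    simp [degree_eq_ite_add_sum_erase G v u, mt G.adj_symm hadj]
  have h' := (G.zykovSym u v).sum_degrees_eq_twice_card_edges
  have h := G.sum_degrees_eq_twice_card_edges
  rw [← add_sum_erase _ _ (mem_univ u), degree_zykovSym_self hadj] at h'
  rw [← add_sum_erase _ _ (mem_univ u)] at h
  omega

/-- Take `u ≁ v ≁ w` with `u ~ w`. Maximality forces `deg u = deg v = deg w`; then symmetrizing
`u` and afterwards `w` into twins of `v` gains an edge, since the first step lowers the degree of
`w` but not that of `v`. -/
theorem isCompleteMultipartite_of_forall_card_edgeFinset_le {M : Set (SimpleGraph V)}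
    (hM : ∀ G ∈ M, ∀ u v, u ≠ v → ¬ G.Adj u v → G.zykovSym u v ∈ M) (hG : G ∈ M)
    (hmax : ∀ G' ∈ M, #G'.edgeFinset ≤ #G.edgeFinset) : _root_.IsCompleteMultipartite G := by
  intro u v w huv hvw
  by_contra huw
  have hne_uv : u ≠ v := by rintro rfl; exact hvw huw
  have hne_wv : w ≠ v := by rintro rfl; exact huv huw
  have hne_wu : w ≠ u := huw.ne.symm
  have hwv : ¬ G.Adj w v := mt G.adj_symm hvw
  have gain : ∀ K ∈ M, ∀ a b, a ≠ b → ¬ K.Adj a b →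
      #(K.zykovSym a b).edgeFinset + K.degree a = #K.edgeFinset + K.degree b ∧
        #(K.zykovSym a b).edgeFinset ≤ #G.edgeFinset :=
    fun K hK a b hab h => ⟨card_edgeFinset_zykovSym_add h, hmax _ (hM K hK a b hab h)⟩
  have h₁ := gain G hG u v hne_uv huv
  have h₂ := gain G hG v u hne_uv.symm (mt G.adj_symm huv)
  have h₃ := gain G hG w v hne_wv hwv
  have h₄ := gain G hG v w hne_wv.symm hvw
  have hw'v : ¬ (G.zykovSym u v).Adj w v := by rwa [zykovSym_adj_of_ne hne_wu hne_uv.symm]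
  have h₅ := gain _ (hM G hG u v hne_uv huv) w v hne_wv hw'v
  have hdv := degree_zykovSym_add (G := G) (v := v) hne_uv.symm
  have hdw := degree_zykovSym_add (G := G) (v := v) hne_wu
  simp only [G.irrefl, if_false, mt G.adj_symm huv, huw.symm, if_true, hwv] at hdv hdw
  omega

end Degree

section

variable {V : Type*} [DecidableEq V]

def ZykovConcave (f : SimpleGraph V → ℝ) : Prop :=
  ∀ (G : SimpleGraph V) (u v : V), u ≠ v → ¬ G.Adj u v →
    2 * f G ≤ f (G.zykovSym u v) + f (G.zykovSym v u)

namespace ZykovConcave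

variable {f g : SimpleGraph V → ℝ}

lemma add (hf : ZykovConcave f) (hg : ZykovConcave g) : ZykovConcave (f + g) :=
  fun G u v huv hadj => by
    simp only [Pi.add_apply]
    linarith [hf G u v huv hadj, hg G u v huv hadj]

lemma const_mul (hf : ZykovConcave f) {c : ℝ} (hc : 0 ≤ c) : ZykovConcave (fun G => c * f G) :=
  fun G u v huv hadj => by nlinarith [hf G u v huv hadj]

lemma sum {ι : Type*} (s : Finset ι) {f : ι → SimpleGraph V → ℝ}
    (hf : ∀ i ∈ s, ZykovConcave (f i)) : ZykovConcave (fun G => ∑ i ∈ s, f i G) :=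
  fun G u v huv hadj => by
    rw [mul_sum, ← sum_add_distrib]
    exact sum_le_sum fun i hi => hf i hi G u v huv hadj

theorem exists_isCompleteMultipartite_forall_le [Fintype V] (hf : ZykovConcave f) :
    ∃ T, _root_.IsCompleteMultipartite T ∧ ∀ G, f G ≤ f T := by
  classical
  set maximizers := {T | ∀ G, f G ≤ f T}
  have hM : ∀ T ∈ maximizers, ∀ u v, u ≠ v → ¬ T.Adj u v → T.zykovSym u v ∈ maximizers :=
    fun T hT u v huv hadj G => by linarith [hf T u v huv hadj, hT G, hT (T.zykovSym v u)]
  obtain ⟨T₀, hT₀⟩ := Finite.exists_max f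
  obtain ⟨T, hT, hmax⟩ :=
    Set.exists_max_image maximizers (fun T => #T.edgeFinset) (Set.toFinite _) ⟨T₀, hT₀⟩
  exact ⟨T, isCompleteMultipartite_of_forall_card_edgeFinset_le hM hT hmax, hT⟩

end ZykovConcave

variable [Finite V] {U : Type*} {H : SimpleGraph U}

theorem zykovConcave_niceCopyCount (hH : _root_.IsCompleteMultipartite H) (r : ℕ) :
    ZykovConcave fun G : SimpleGraph V => (niceCopyCount H (completeGraph (Fin r)) G : ℝ) :=
  fun _ _ _ huv hadj => by
    beta_reduce
    exact_mod_cast two_mul_niceCopyCount_le hH huv hadj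

theorem zykovConcave_copyCount (hH : _root_.IsCompleteMultipartite H) :
    ZykovConcave fun G : SimpleGraph V => (_root_.copyCount H G : ℝ) := by
  simpa only [copyCount_eq_niceCopyCount] using zykovConcave_niceCopyCount hH _

end

end SimpleGraph

theorem weighted_sum_maximized_by_completeMultipartite_general
    (l m : ℕ) (a : Fin l → ℕ) (b : Fin m → ℕ)
    (H : (i : Fin l) → SimpleGraph (Fin (a i)))
    (H' : (j : Fin m) → SimpleGraph (Fin (b j)))
    (hH : ∀ i, _root_.IsCompleteMultipartite (H i))
    (hH' : ∀ j, _root_.IsCompleteMultipartite (H' j))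
    (k : Fin l → ℕ)
    (α : Fin l → ℝ) (β : Fin m → ℝ) (hα : ∀ i, 0 ≤ α i) (hβ : ∀ j, 0 ≤ β j)
    (n : ℕ) :
    ∃ T : SimpleGraph (Fin n), _root_.IsCompleteMultipartite T ∧
      ∀ G : SimpleGraph (Fin n),
        (∑ i, α i * (niceCopyCount (H i) (completeGraph (Fin (k i + 1))) G : ℝ)
          + ∑ j, β j * (_root_.copyCount (H' j) G : ℝ))
        ≤ (∑ i, α i * (niceCopyCount (H i) (completeGraph (Fin (k i + 1))) T : ℝ)
          + ∑ j, β j * (_root_.copyCount (H' j) T : ℝ)) :=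
  ZykovConcave.exists_isCompleteMultipartite_forall_le <|
    (ZykovConcave.sum _ fun i _ => (zykovConcave_niceCopyCount (hH i) _).const_mul (hα i)).add
      (ZykovConcave.sum _ fun j _ => (zykovConcave_copyCount (hH' j)).const_mul (hβ j))

/-- Let `H_1,…,H_ℓ, H'_1,…,H'_m` be complete multipartite graphs, `k_i ≥ 1`, and
`α_i, β_j ≥ 0`. Then `x(G) = Σ α_i N_re(H_i,K_{k_i+1},G) + Σ β_j N(H'_j,G)` is maximized
over `n`-vertex graphs by a complete multipartite graph. -/
theorem weighted_sum_maximized_by_completeMultipartite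
    (l m : ℕ) (a : Fin l → ℕ) (b : Fin m → ℕ)
    (H : (i : Fin l) → SimpleGraph (Fin (a i)))
    (H' : (j : Fin m) → SimpleGraph (Fin (b j)))
    (hH : ∀ i, _root_.IsCompleteMultipartite (H i))
    (hH' : ∀ j, _root_.IsCompleteMultipartite (H' j))
    (k : Fin l → ℕ) (hk : ∀ i, 1 ≤ k i)
    (α : Fin l → ℝ) (β : Fin m → ℝ) (hα : ∀ i, 0 ≤ α i) (hβ : ∀ j, 0 ≤ β j)
    (n : ℕ) :
    ∃ T : SimpleGraph (Fin n), _root_.IsCompleteMultipartite T ∧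
      ∀ G : SimpleGraph (Fin n),
        (∑ i, α i * (niceCopyCount (H i) (completeGraph (Fin (k i + 1))) G : ℝ)
          + ∑ j, β j * (_root_.copyCount (H' j) G : ℝ))
        ≤ (∑ i, α i * (niceCopyCount (H i) (completeGraph (Fin (k i + 1))) T : ℝ)
          + ∑ j, β j * (_root_.copyCount (H' j) T : ℝ)) :=
  weighted_sum_maximized_by_completeMultipartite_general l m a b H H' hH hH' k α β hα hβ n
end

section
/- For every n, ex_re(n,K_3,C_4) = ex_re(n,K_3,B_2) = ex(n,K_3,B_2), where B_2 is the book with two pages. In particular, a triangle in a graph G aligns with a copy of C_4 in G if and only if it aligns with a copy of B_2 in G, and the maximum number of triangles not aligning with any B_2 in an n-vertex graph equals the maximum number of triangles in an n-vertex B_2-free graph. -/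
open SimpleGraph

/-- The book with two pages: two triangles sharing an edge, i.e. `K_4` minus an edge. -/
def bookTwo : SimpleGraph (Fin 4) := (completeGraph (Fin 4)).deleteEdges {s(0, 1)}


/-!
A triangle has three vertices, so it can align with a four-vertex graph only by lying inside
it. Three of the four vertices of a 4-cycle contain one of its diagonals, which the triangle
supplies as an edge, and a 4-cycle with a diagonal is a `B₂` on the same vertex set; conversely
every `B₂` contains a spanning 4-cycle. Hence a triangle aligns with a `C₄` iff it aligns with
a `B₂`.

In a `B₂`-free graph every triangle is nice. Conversely, let `G'` be the union of the nice
triangles of `G`. If a nice triangle contains the edge `xy`, it also contains every common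
neighbour of `x` and `y`, which would otherwise span a `B₂` with it. Consequently `G'` is
`B₂`-free and its triangles are exactly the nice triangles of `G`.
-/

open Function

local notation "K₃" => completeGraph (Fin 3)

lemma Function.Injective.mem_or_mem_of_subset_range {α β : Type*} [Finite α] {f : α → β}
    (hf : Injective f) {s : Set β} (hs : s ⊆ Set.range f) (hcard : Nat.card α ≤ s.ncard + 1)
    {i j : α} (hij : i ≠ j) : f i ∈ s ∨ f j ∈ s := by
  by_contra! h
  have hsub : s ⊆ Set.range f \ {f i, f j} := fun x hx =>
    ⟨hs hx, by rintro (rfl | rfl) <;> simp_all⟩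
  have hpair : ({f i, f j} : Set β) ⊆ Set.range f := by
    simp [Set.insert_subset_iff]
  have hdiff := Set.ncard_sdiff_add_ncard_of_subset hpair
  rw [Set.ncard_range_of_injective hf, Set.ncard_pair (hf.ne hij)] at hdiff
  have := Set.ncard_le_ncard hsub
  omega

lemma Set.exists_eq_triple_of_ncard_eq_three {α : Type*} {s : Set α} (hs : s.ncard = 3)
    {x y : α} (hx : x ∈ s) (hy : y ∈ s) (hxy : x ≠ y) : ∃ z, z ≠ x ∧ z ≠ y ∧ s = {z, x, y} := by
  have hpair : {x, y} ⊆ s := Set.insert_subset hx (Set.singleton_subset_iff.2 hy)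
  have hdiff := Set.ncard_sdiff_add_ncard_of_subset hpair (Set.finite_of_ncard_pos (by omega))
  rw [Set.ncard_pair hxy, hs] at hdiff
  obtain ⟨z, hz⟩ := Set.ncard_eq_one.1 (by omega : (s \ {x, y}).ncard = 1)
  have hz' : z ∈ s \ {x, y} := hz ▸ rfl
  refine ⟨z, fun h => hz'.2 (Or.inl h), fun h => hz'.2 (Or.inr h), ?_⟩
  rw [← Set.sdiff_union_of_subset hpair, hz, Set.singleton_union]

namespace SimpleGraph

variable {V W U : Type*} {G : SimpleGraph V} {H : SimpleGraph W} {F : SimpleGraph U}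

lemma Copy.verts_toSubgraph (f : Copy H G) : f.toSubgraph.verts = Set.range f := by
  simp

lemma Copy.isCopyOf_toSubgraph (f : Copy H G) : f.toSubgraph.IsCopyOf H :=
  ⟨f.isoToSubgraph.symm⟩

namespace Subgraph

variable {A B : G.Subgraph}

lemma IsCopyOf.exists_copy (hA : A.IsCopyOf H) : ∃ f : Copy H G, f.toSubgraph = A := by
  obtain ⟨e⟩ := hA
  have hA' : A ∈ Set.range (Copy.toSubgraph (A := H)) := by
    rw [Copy.range_toSubgraph]
    exact ⟨e.symm⟩
  exact hA'

lemma IsCopyOf.ncard_verts_s8 (hA : A.IsCopyOf H) : A.verts.ncard = Nat.card W := by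
  obtain ⟨e⟩ := hA
  exact (Nat.card_coe_set_eq _).symm.trans (Nat.card_congr e.toEquiv)

lemma IsCopyOf.finite_verts [Finite W] (hA : A.IsCopyOf H) : A.verts.Finite :=
  have ⟨e⟩ := hA
  Set.finite_coe_iff.1 (Finite.of_equiv W e.toEquiv.symm)

lemma IsCopyOf.not_verts_subset [Finite W] {G' : SimpleGraph V} {B : G'.Subgraph}
    (hA : A.IsCopyOf H) (hB : B.IsCopyOf F) (hcard : Nat.card W < Nat.card U) :
    ¬ B.verts ⊆ A.verts := fun hBA => by
  have := Set.ncard_le_ncard hBA hA.finite_verts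
  rw [hA.ncard_verts_s8, hB.ncard_verts_s8] at this
  omega

lemma IsCopyOf.verts_subset_of_aligns [Finite W] (hA : A.IsCopyOf H) (hB : B.IsCopyOf F)
    (hcard : Nat.card W < Nat.card U) (h : A.Aligns B) : A.verts ⊆ B.verts :=
  h.resolve_right (hA.not_verts_subset hB hcard)

lemma aligns_congr_left {A' : G.Subgraph} (h : A.verts = A'.verts) :
    A.Aligns B ↔ A'.Aligns B := by
  rw [Aligns, Aligns, h]

lemma aligns_congr_right {B' : G.Subgraph} (h : B.verts = B'.verts) :
    A.Aligns B ↔ A.Aligns B' := by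
  rw [Aligns, Aligns, h]

lemma nice_iff_not_exists : A.Nice F ↔ ¬ ∃ B : G.Subgraph, B.IsCopyOf F ∧ A.Aligns B := by
  simp [Nice]

lemma Nice.of_verts_eq {A' : G.Subgraph} (hA : A.Nice F) (h : A.verts = A'.verts) :
    A'.Nice F :=
  fun C hC hA'C => hA C hC ((aligns_congr_left h).2 hA'C)

lemma IsCopyOf.adj_iff_of_completeGraph (hA : A.IsCopyOf (completeGraph W)) {x y : V} :
    A.Adj x y ↔ x ∈ A.verts ∧ y ∈ A.verts ∧ x ≠ y := by
  obtain ⟨e⟩ := hA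
  refine ⟨fun h => ⟨A.edge_vert h, A.edge_vert h.symm, (A.adj_sub h).ne⟩, ?_⟩
  rintro ⟨hx, hy, hxy⟩
  simpa [hxy] using e.map_adj_iff (v := ⟨x, hx⟩) (w := ⟨y, hy⟩)

lemma IsCopyOf.isClique_verts_s8 (hA : A.IsCopyOf (completeGraph W)) : G.IsClique A.verts :=
  fun _ hx _ hy hxy => A.adj_sub (hA.adj_iff_of_completeGraph.2 ⟨hx, hy, hxy⟩)

def equivOfLE {G' : SimpleGraph V} (h : G' ≤ G) :
    G'.Subgraph ≃ {A : G.Subgraph // ∀ ⦃x y⦄, A.Adj x y → G'.Adj x y} where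
  toFun A := ⟨⟨A.verts, A.Adj, fun hxy => h (A.adj_sub hxy), A.edge_vert, A.symm⟩,
    fun _ _ => A.adj_sub⟩
  invFun A := ⟨A.1.verts, A.1.Adj, fun hxy => A.2 hxy, A.1.edge_vert, A.1.symm⟩
  left_inv _ := rfl
  right_inv _ := rfl

end Subgraph

lemma bookTwo_adj {i j : Fin 4} : bookTwo.Adj i j ↔ i ≠ j ∧ s(i, j) ≠ s(0, 1) := by
  simp [bookTwo, completeGraph_eq_top]

instance : DecidableRel bookTwo.Adj := fun _ _ => decidable_of_iff _ bookTwo_adj.symm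

/-- The spanning cycle page `0`, spine `2`, page `1`, spine `3` of the book. -/
def cycleGraphCopyBookTwo : Copy (cycleGraph 4) bookTwo :=
  ⟨⟨![0, 2, 1, 3], by decide⟩, by decide⟩

lemma cycleGraphCopyBookTwo_surjective : Surjective cycleGraphCopyBookTwo := by
  decide

lemma Subgraph.IsCopyOf.exists_cycleGraph_of_bookTwo {B : G.Subgraph}
    (hB : B.IsCopyOf bookTwo) :
    ∃ C : G.Subgraph, C.IsCopyOf (cycleGraph 4) ∧ C.verts = B.verts := by
  obtain ⟨f, rfl⟩ := hB.exists_copy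
  refine ⟨(f.comp cycleGraphCopyBookTwo).toSubgraph, Copy.isCopyOf_toSubgraph _, ?_⟩
  simp only [Copy.verts_toSubgraph, Copy.coe_comp]
  exact cycleGraphCopyBookTwo_surjective.range_comp f

lemma exists_isCopyOf_bookTwo {f : Fin 4 → V} (hf : Injective f) (h02 : G.Adj (f 0) (f 2))
    (h03 : G.Adj (f 0) (f 3)) (h12 : G.Adj (f 1) (f 2)) (h13 : G.Adj (f 1) (f 3))
    (h23 : G.Adj (f 2) (f 3)) :
    ∃ B : G.Subgraph, B.IsCopyOf bookTwo ∧ B.verts = Set.range f := by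
  let e : Copy bookTwo G := ⟨⟨f, fun {i j} h => by
    fin_cases i <;> fin_cases j <;> simp_all [bookTwo_adj, G.adj_comm]⟩, hf⟩
  exact ⟨e.toSubgraph, e.isCopyOf_toSubgraph, e.verts_toSubgraph⟩

lemma exists_isCopyOf_bookTwo_of_cycleGraph (f : Copy (cycleGraph 4) G)
    (hdiag : G.Adj (f 0) (f 2) ∨ G.Adj (f 1) (f 3)) :
    ∃ B : G.Subgraph, B.IsCopyOf bookTwo ∧ B.verts = Set.range f := by
  have hcyc {i j : Fin 4} (h : (cycleGraph 4).Adj i j := by decide) : G.Adj (f i) (f j) :=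
    f.toHom.map_adj h
  -- relabel so that the diagonal becomes the spine `2 3` of the book
  rcases hdiag with h02 | h13
  · have hσ : Bijective ![(1 : Fin 4), 3, 0, 2] := by decide
    rw [← hσ.2.range_comp]
    exact exists_isCopyOf_bookTwo (f.injective.comp hσ.1) hcyc hcyc hcyc hcyc h02
  · have hσ : Bijective ![(0 : Fin 4), 2, 1, 3] := by decide
    rw [← hσ.2.range_comp]
    exact exists_isCopyOf_bookTwo (f.injective.comp hσ.1) hcyc hcyc hcyc hcyc h13

namespace Subgraph

variable {T : G.Subgraph}

lemma IsCopyOf.adj_diagonal_of_verts_subset (hT : T.IsCopyOf K₃) (f : Copy (cycleGraph 4) G)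
    (hsub : T.verts ⊆ Set.range f) : G.Adj (f 0) (f 2) ∨ G.Adj (f 1) (f 3) := by
  have hmem {i j : Fin 4} (hij : i ≠ j := by decide) : f i ∈ T.verts ∨ f j ∈ T.verts :=
    f.injective.mem_or_mem_of_subset_range hsub (by simp [hT.ncard_verts_s8]) hij
  have hdiag : (f 0 ∈ T.verts ∧ f 2 ∈ T.verts) ∨ (f 1 ∈ T.verts ∧ f 3 ∈ T.verts) := by
    have := @hmem 0 1; have := @hmem 0 2; have := @hmem 0 3
    have := @hmem 1 2; have := @hmem 1 3; have := @hmem 2 3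
    tauto
  rcases hdiag with ⟨h0, h2⟩ | ⟨h1, h3⟩
  · exact Or.inl (hT.isClique_verts_s8 h0 h2 (f.injective.ne (by decide)))
  · exact Or.inr (hT.isClique_verts_s8 h1 h3 (f.injective.ne (by decide)))

theorem IsCopyOf.exists_cycleGraph_aligns_iff_exists_bookTwo_aligns (hT : T.IsCopyOf K₃) :
    (∃ B : G.Subgraph, B.IsCopyOf (cycleGraph 4) ∧ T.Aligns B) ↔
      (∃ B : G.Subgraph, B.IsCopyOf bookTwo ∧ T.Aligns B) := by
  constructor
  · rintro ⟨B, hB, hTB⟩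
    have hsub := hT.verts_subset_of_aligns hB (by simp) hTB
    obtain ⟨f, rfl⟩ := hB.exists_copy
    rw [Copy.verts_toSubgraph] at hsub
    obtain ⟨B', hB', hB'v⟩ :=
      exists_isCopyOf_bookTwo_of_cycleGraph f (hT.adj_diagonal_of_verts_subset f hsub)
    exact ⟨B', hB', Or.inl (hB'v ▸ hsub)⟩
  · rintro ⟨B, hB, hTB⟩
    obtain ⟨C, hC, hCv⟩ := IsCopyOf.exists_cycleGraph_of_bookTwo hB
    exact ⟨C, hC, (aligns_congr_right hCv.symm).1 hTB⟩

lemma Nice.mem_verts_of_adj (hT : T.IsCopyOf K₃) (hN : T.Nice bookTwo) {a x y : V}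
    (hxy : T.Adj x y) (hax : G.Adj a x) (hay : G.Adj a y) : a ∈ T.verts := by
  by_contra ha
  obtain ⟨z, hzx, hzy, hTv⟩ := Set.exists_eq_triple_of_ncard_eq_three
    (by simp [hT.ncard_verts_s8]) (T.edge_vert hxy) (T.edge_vert hxy.symm) (T.adj_sub hxy).ne
  have hcl := hT.isClique_verts_s8
  rw [hTv] at hcl ha
  have hinj : Injective ![a, z, x, y] := by
    have hne := (T.adj_sub hxy).ne
    intro i j hij
    fin_cases i <;> fin_cases j <;> simp_all [eq_comm]
  obtain ⟨B, hB, hBv⟩ := exists_isCopyOf_bookTwo hinj hax hay (hcl (by simp) (by simp) hzx)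
    (hcl (by simp) (by simp) hzy) (T.adj_sub hxy)
  refine hN B hB (Or.inl ?_)
  rw [hBv, hTv]
  rintro w (rfl | rfl | rfl)
  exacts [⟨1, rfl⟩, ⟨2, rfl⟩, ⟨3, rfl⟩]

end Subgraph

def niceTriangleGraph (G : SimpleGraph V) : SimpleGraph V :=
  ⨆ T : {T : G.Subgraph // T.IsCopyOf K₃ ∧ T.Nice bookTwo}, T.1.spanningCoe

lemma niceTriangleGraph_adj {x y : V} : (niceTriangleGraph G).Adj x y ↔
    ∃ T : G.Subgraph, T.IsCopyOf K₃ ∧ T.Nice bookTwo ∧ T.Adj x y := by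
  simp [niceTriangleGraph, and_assoc]

lemma niceTriangleGraph_le : niceTriangleGraph G ≤ G := fun _ _ h => by
  obtain ⟨T, -, -, hT⟩ := niceTriangleGraph_adj.1 h
  exact T.adj_sub hT

lemma freeOf_bookTwo_niceTriangleGraph : FreeOf bookTwo (niceTriangleGraph G) := by
  rintro ⟨A, hA⟩
  obtain ⟨f, rfl⟩ := hA.exists_copy
  have hadj {i j : Fin 4} (h : bookTwo.Adj i j := by decide) :
      (niceTriangleGraph G).Adj (f i) (f j) :=
    f.toHom.map_adj h
  have hG {i j : Fin 4} (h : bookTwo.Adj i j := by decide) : G.Adj (f i) (f j) :=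
    niceTriangleGraph_le (hadj h)
  obtain ⟨T, hT, hN, h23⟩ := niceTriangleGraph_adj.1 (hadj (i := 2) (j := 3))
  refine hT.not_verts_subset hA (by simp) ?_
  rw [Copy.verts_toSubgraph, Set.range_subset_iff]
  intro i
  fin_cases i
  · exact hN.mem_verts_of_adj hT h23 hG hG
  · exact hN.mem_verts_of_adj hT h23 hG hG
  · exact T.edge_vert h23
  · exact T.edge_vert h23.symm

lemma Subgraph.IsCopyOf.nice_bookTwo_iff_forall_adj_niceTriangleGraph {T : G.Subgraph}
    (hT : T.IsCopyOf K₃) :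
    T.Nice bookTwo ↔ ∀ ⦃x y⦄, T.Adj x y → (niceTriangleGraph G).Adj x y := by
  refine ⟨fun hN x y h => niceTriangleGraph_adj.2 ⟨T, hT, hN, h⟩, fun h => ?_⟩
  have hT3 : T.verts.ncard = 3 := by simp [hT.ncard_verts_s8]
  obtain ⟨p, q, r, hpq, hpr, hqr, hTv⟩ := Set.ncard_eq_three.1 hT3
  have hcl := hT.isClique_verts_s8
  rw [hTv] at hcl
  obtain ⟨T', hT', hN', hpq'⟩ := niceTriangleGraph_adj.1
    (h (hT.adj_iff_of_completeGraph.2 ⟨by simp [hTv], by simp [hTv], hpq⟩))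
  have hr := hN'.mem_verts_of_adj hT' hpq' (hcl (by simp) (by simp) hpr.symm)
    (hcl (by simp) (by simp) hqr.symm)
  have hsub : T.verts ⊆ T'.verts := by
    rw [hTv]
    rintro w (rfl | rfl | rfl)
    exacts [T'.edge_vert hpq', T'.edge_vert hpq'.symm, hr]
  refine hN'.of_verts_eq (Set.eq_of_subset_of_ncard_le hsub ?_ hT'.finite_verts).symm
  simp [hT.ncard_verts_s8, hT'.ncard_verts_s8]

lemma copyCount_niceTriangleGraph :
    _root_.copyCount K₃ (niceTriangleGraph G) = niceCopyCount K₃ bookTwo G :=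
  Nat.card_congr <|
    ((Subgraph.equivOfLE niceTriangleGraph_le).subtypeEquiv
      (q := fun A => A.1.IsCopyOf K₃) fun _ => Iff.rfl).trans <|
    (Equiv.subtypeSubtypeEquivSubtypeInter _ _).trans <| Equiv.subtypeEquivRight fun _ =>
      and_comm.trans <| and_congr_right fun hT =>
        (Subgraph.IsCopyOf.nice_bookTwo_iff_forall_adj_niceTriangleGraph hT).symm

lemma niceCopyCount_eq_copyCount_of_freeOf (hG : FreeOf F G) :
    niceCopyCount H F G = _root_.copyCount H G :=
  Nat.card_congr <| Equiv.subtypeEquivRight fun _ => and_iff_left fun B hB _ => hG ⟨B, hB⟩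

lemma niceCopyCount_cycleGraph_eq_bookTwo :
    niceCopyCount K₃ (cycleGraph 4) G = niceCopyCount K₃ bookTwo G :=
  Nat.card_congr <| Equiv.subtypeEquivRight fun _ => and_congr_right fun hT => by
    simp only [Subgraph.nice_iff_not_exists,
      hT.exists_cycleGraph_aligns_iff_exists_bookTwo_aligns]

end SimpleGraph

/-- `ex_re(n,K_3,C_4) = ex_re(n,K_3,B_2) = ex(n,K_3,B_2)`; moreover, a triangle aligns with
a copy of `C_4` iff it aligns with a copy of `B_2`. -/
theorem exRe_triangle_C4_eq_book :
    (∀ n : ℕ,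
      exRe n (completeGraph (Fin 3)) (cycleGraph 4) = exRe n (completeGraph (Fin 3)) bookTwo ∧
      exRe n (completeGraph (Fin 3)) bookTwo = exGen n (completeGraph (Fin 3)) bookTwo) ∧
    (∀ (V : Type*) (G : SimpleGraph V) (A : G.Subgraph),
      A.IsCopyOf (completeGraph (Fin 3)) →
        ((∃ B : G.Subgraph, B.IsCopyOf (cycleGraph 4) ∧ A.Aligns B) ↔
          (∃ B : G.Subgraph, B.IsCopyOf bookTwo ∧ A.Aligns B))) := by
  refine ⟨fun n => ⟨?_, ?_⟩, fun V G T hT => hT.exists_cycleGraph_aligns_iff_exists_bookTwo_aligns⟩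
  · simp only [exRe, niceCopyCount_cycleGraph_eq_bookTwo]
  · refine congrArg sSup (Set.ext fun N => ⟨?_, ?_⟩)
    · rintro ⟨G, rfl⟩
      exact ⟨niceTriangleGraph G, freeOf_bookTwo_niceTriangleGraph,
        copyCount_niceTriangleGraph.symm⟩
    · rintro ⟨G, hG, rfl⟩
      exact ⟨G, (niceCopyCount_eq_copyCount_of_freeOf hG).symm⟩
end

section
/- Let t and t' be integers with 2 < t < t'. Then ex_re(n,K_{2,t},K_{2,t'}) ≤ C(t'−1, t)·C(n,2), where C(·,·) denotes the binomial coefficient. In particular, in any graph G, if two vertices u and v have at least t' common neighbors, then every copy of K_{2,t} having {u,v} as its smaller part aligns with a copy of K_{2,t'} in G. -/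
open SimpleGraph

/-! If the small part `P` of a copy of `K_{s,t}` has at least `t'` common neighbours, adding
common neighbours of `P` to the large part enlarges it to a copy of `K_{s,t'}` containing it.
Hence the small part of a copy of `K_{s,t}` that aligns with no copy of `K_{s,t'}` has fewer than
`t'` common neighbours, and such a copy is determined by its small part (at most `C(n,s)`
choices) and its large part, a `t`-subset of the common neighbourhood of the small part (at most
`C(t'-1,t)` choices). For the second claim, `u ≠ v` because for `t ≥ 2` no vertex of
`K_{2,t}` is adjacent to all the others. -/

open Set Function

namespace SimpleGraph

variable {V W α β : Type*} {G : SimpleGraph V}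

def commonNeighborSet (G : SimpleGraph V) (s : Set V) : Set V :=
  {x | ∀ a ∈ s, G.Adj a x}

theorem commonNeighborSet_pair (u v : V) :
    G.commonNeighborSet {u, v} = G.commonNeighbors u v := by
  ext x
  simp [commonNeighborSet, commonNeighbors]

def betweenSubgraph (G : SimpleGraph V) (s t : Set V) : G.Subgraph where
  verts := s ∪ t
  Adj := (G.between s t).Adj
  adj_sub h := h.1
  edge_vert := by rintro v w ⟨-, ⟨hv, -⟩ | ⟨hv, -⟩⟩ <;> simp [hv]
  symm := (G.between s t).symm

theorem Subgraph.isCopyOf_iff_exists_copy {H : SimpleGraph W} {A : G.Subgraph} :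
    A.IsCopyOf H ↔ ∃ f : Copy H G, f.toSubgraph = A := by
  rw [← Set.mem_range, Copy.range_toSubgraph, Set.mem_ofPred_eq]
  exact ⟨fun ⟨e⟩ ↦ ⟨e.symm⟩, fun ⟨e⟩ ↦ ⟨e.symm⟩⟩

namespace Copy

variable {H : SimpleGraph W}

theorem toSubgraph_verts (f : Copy H G) : f.toSubgraph.verts = range f := by
  simp

theorem toSubgraph_adj_apply (f : Copy H G) {a b : W} :
    f.toSubgraph.Adj (f a) (f b) ↔ H.Adj a b := by
  refine ⟨fun ⟨a', b', h, ha, hb⟩ ↦ ?_, fun h ↦ ⟨a, b, h, rfl, rfl⟩⟩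
  rwa [f.injective ha, f.injective hb] at h

theorem toSubgraph_completeBipartiteGraph
    (f : Copy (_root_.completeBipartiteGraph α β) G) :
    f.toSubgraph = G.betweenSubgraph (range (f ∘ Sum.inl)) (range (f ∘ Sum.inr)) := by
  ext x y
  · simp [betweenSubgraph, ← Sum.elim_range]
  · simp only [Subgraph.map_adj, Relation.Map, Subgraph.top_adj, betweenSubgraph, between_adj]
    constructor
    · rintro ⟨a | a, b | b, hab, rfl, rfl⟩
      · simp at hab
      · exact ⟨f.toHom.map_adj hab, .inl ⟨mem_range_self _, mem_range_self _⟩⟩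
      · exact ⟨f.toHom.map_adj hab, .inr ⟨mem_range_self _, mem_range_self _⟩⟩
      · simp at hab
    · rintro ⟨-, ⟨⟨a, rfl⟩, ⟨b, rfl⟩⟩ | ⟨⟨b, rfl⟩, ⟨a, rfl⟩⟩⟩
      exacts [⟨_, _, by simp, rfl, rfl⟩, ⟨_, _, by simp, rfl, rfl⟩]

def ofIsCompleteBetween {l : α → V} {r : β → V} (hl : Injective l) (hr : Injective r)
    (h : G.IsCompleteBetween (range l) (range r)) :
    Copy (_root_.completeBipartiteGraph α β) G :=
  ⟨⟨Sum.elim l r, by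
    rintro (a | b) (a' | b') hab
    · simp at hab
    · exact h (mem_range_self a) (mem_range_self b')
    · exact (h (mem_range_self a') (mem_range_self b)).symm
    · simp at hab⟩,
    hl.sumElim hr fun a b ↦ (h (mem_range_self a) (mem_range_self b)).ne⟩

end Copy

theorem completeBipartiteGraph.exists_ne_not_adj [Nontrivial α] [Nontrivial β] (z : α ⊕ β) :
    ∃ z', z' ≠ z ∧ ¬ (completeBipartiteGraph α β).Adj z z' := by
  rcases z with a | b
  · obtain ⟨a', ha'⟩ := exists_ne a
    exact ⟨.inl a', by simpa using ha', by simp⟩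
  · obtain ⟨b', hb'⟩ := exists_ne b
    exact ⟨.inr b', by simpa using hb', by simp⟩

theorem exists_isCopyOf_completeBipartiteGraph_superset {t : ℕ} (ht : 0 < t) {l : α → V}
    (hl : Injective l) {T : Set V} (hT : T ⊆ G.commonNeighborSet (range l))
    (hTt : T.ncard ≤ t) (htC : t ≤ (G.commonNeighborSet (range l)).ncard) :
    ∃ B : G.Subgraph, B.IsCopyOf (completeBipartiteGraph α (Fin t)) ∧
      range l ∪ T ⊆ B.verts := by
  obtain ⟨S, hTS, hSC, hSt⟩ := exists_subsuperset_card_eq hT hTt htC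
  have : Finite S := (finite_of_ncard_pos (hSt ▸ ht)).to_subtype
  let e : S ≃ Fin t := Finite.equivFinOfCardEq (by rw [Nat.card_coe_set_eq, hSt])
  have hr : range ((↑) ∘ e.symm) = S := by rw [EquivLike.range_comp, Subtype.range_coe]
  let f := Copy.ofIsCompleteBetween hl (Subtype.val_injective.comp e.symm.injective)
    (hr ▸ fun a ha x hx ↦ hSC hx a ha)
  refine ⟨f.toSubgraph, Subgraph.isCopyOf_iff_exists_copy.mpr ⟨f, rfl⟩, ?_⟩
  rw [f.toSubgraph_verts]
  change _ ⊆ range (Sum.elim _ _)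
  rw [Sum.elim_range, hr]
  exact union_subset_union_right _ hTS

theorem exists_isCopyOf_aligns_of_le_ncard_commonNeighbors {t t' : ℕ} (ht : 2 ≤ t)
    (htt' : t ≤ t') {u v : V} (hcn : t' ≤ (G.commonNeighbors u v).ncard) {A : G.Subgraph}
    (hA : A.IsCopyOf (completeBipartiteGraph (Fin 2) (Fin t))) (hu : u ∈ A.verts)
    (hv : v ∈ A.verts)
    (hadj : ∀ w ∈ A.verts, w ≠ u → w ≠ v → A.Adj u w ∧ A.Adj v w) :
    ∃ B : G.Subgraph, B.IsCopyOf (completeBipartiteGraph (Fin 2) (Fin t')) ∧ A.Aligns B := by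
  obtain ⟨f, rfl⟩ := Subgraph.isCopyOf_iff_exists_copy.mp hA
  have huv : u ≠ v := by
    rintro rfl
    have : Nontrivial (Fin t) := Fin.nontrivial_iff_two_le.mpr ht
    obtain ⟨z, rfl⟩ : u ∈ range f := f.toSubgraph_verts ▸ hu
    obtain ⟨z', hne, hnadj⟩ := completeBipartiteGraph.exists_ne_not_adj z
    have hz' : f z' ∈ f.toSubgraph.verts := f.toSubgraph_verts ▸ mem_range_self z'
    exact hnadj (f.toSubgraph_adj_apply.mp (hadj _ hz' (f.injective.ne hne) (f.injective.ne hne)).1)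
  have hl : Injective ![u, v] := by
    intro i j
    fin_cases i <;> fin_cases j <;> simp [huv, huv.symm]
  have hrange : range ![u, v] = {u, v} := Matrix.range_cons_cons_empty u v _
  have hT : f.toSubgraph.verts \ {u, v} ⊆ G.commonNeighborSet (range ![u, v]) := by
    rw [hrange, commonNeighborSet_pair]
    rintro w ⟨hw, hwuv⟩
    simp only [mem_insert_iff, mem_singleton_iff, not_or] at hwuv
    obtain ⟨hwu, hwv⟩ := hadj w hw hwuv.1 hwuv.2
    exact ⟨f.toSubgraph.adj_sub hwu, f.toSubgraph.adj_sub hwv⟩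
  have hTt : (f.toSubgraph.verts \ {u, v}).ncard ≤ t' := by
    rw [ncard_sdiff (insert_subset hu (singleton_subset_iff.mpr hv)), ncard_pair huv,
      f.toSubgraph_verts, ncard_range_of_injective (f := ⇑f) f.injective]
    simpa only [Nat.card_eq_fintype_card, Fintype.card_sum, Fintype.card_fin,
      add_tsub_cancel_left] using htt'
  obtain ⟨B, hB, hAB⟩ := exists_isCopyOf_completeBipartiteGraph_superset (by omega) hl hT hTt
    (by rwa [hrange, commonNeighborSet_pair])
  rw [hrange, union_sdiff_self] at hAB
  exact ⟨B, hB, .inl (subset_union_right.trans hAB)⟩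

theorem Subgraph.Nice.exists_eq_betweenSubgraph [Fintype α] {t t' : ℕ} (htt' : t < t')
    {A : G.Subgraph} (hA : A.IsCopyOf (completeBipartiteGraph α (Fin t)))
    (hnice : A.Nice (completeBipartiteGraph α (Fin t'))) :
    ∃ P : Finset V, P.card = Fintype.card α ∧ (G.commonNeighborSet P).ncard < t' ∧
      ∃ T : Finset V, ↑T ⊆ G.commonNeighborSet P ∧ T.card = t ∧
        A = G.betweenSubgraph P T := by
  classical
  obtain ⟨f, rfl⟩ := Subgraph.isCopyOf_iff_exists_copy.mp hA
  have hl : Injective (f ∘ Sum.inl) := f.injective.comp Sum.inl_injective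
  have hr : Injective (f ∘ Sum.inr) := f.injective.comp Sum.inr_injective
  have hP : (↑(Finset.univ.image (f ∘ Sum.inl)) : Set V) = range (f ∘ Sum.inl) := by
    rw [Finset.coe_image, Finset.coe_univ, image_univ]
  have hT : (↑(Finset.univ.image (f ∘ Sum.inr)) : Set V) = range (f ∘ Sum.inr) := by
    rw [Finset.coe_image, Finset.coe_univ, image_univ]
  have hsub : range (f ∘ Sum.inr) ⊆ G.commonNeighborSet (range (f ∘ Sum.inl)) := by
    rintro _ ⟨j, rfl⟩ _ ⟨i, rfl⟩
    exact f.toHom.map_adj (by simp)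
  refine ⟨_, Finset.card_image_of_injective _ hl, ?_, _, hP ▸ hT ▸ hsub,
    by simp [Finset.card_image_of_injective _ hr],
    hP ▸ hT ▸ f.toSubgraph_completeBipartiteGraph⟩
  rw [hP]
  by_contra! hcn
  obtain ⟨B, hB, hAB⟩ := exists_isCopyOf_completeBipartiteGraph_superset (by omega) hl hsub
    (by simp [ncard_range_of_injective hr, htt'.le]) hcn
  exact hnice B hB (.inl (by rwa [f.toSubgraph_verts, Sum.range_eq]))

end SimpleGraph

theorem niceCopyCount_completeBipartiteGraph_le {V : Type*} [Fintype V] {s t t' : ℕ}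
    (htt' : t < t') (G : SimpleGraph V) :
    niceCopyCount (completeBipartiteGraph (Fin s) (Fin t))
        (completeBipartiteGraph (Fin s) (Fin t')) G ≤
      (t' - 1).choose t * (Fintype.card V).choose s := by
  classical
  let parts : Finset (Finset V) :=
    (Finset.univ.powersetCard s).filter fun P ↦ (G.commonNeighborSet P).ncard < t'
  let copies (P : Finset V) : Finset G.Subgraph :=
    ((G.commonNeighborSet P).toFinset.powersetCard t).image
      fun T : Finset V ↦ G.betweenSubgraph P T
  have hmem : ∀ A : G.Subgraph, A.IsCopyOf (completeBipartiteGraph (Fin s) (Fin t)) ∧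
      A.Nice (completeBipartiteGraph (Fin s) (Fin t')) → A ∈ parts.biUnion copies := by
    rintro A ⟨hA, hnice⟩
    obtain ⟨P, hPs, hPt', T, hT, hTt, rfl⟩ := hnice.exists_eq_betweenSubgraph htt' hA
    simp only [parts, copies, Finset.mem_biUnion, Finset.mem_filter, Finset.mem_powersetCard,
      Finset.mem_image]
    exact ⟨P, ⟨⟨Finset.subset_univ P, by simpa using hPs⟩, hPt'⟩, T,
      ⟨by simpa using hT, hTt⟩, rfl⟩
  have hcopies : ∀ P ∈ parts, (copies P).card ≤ (t' - 1).choose t := by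
    intro P hP
    refine Finset.card_image_le.trans ?_
    rw [Finset.card_powersetCard, ← ncard_eq_toFinset_card']
    exact Nat.choose_le_choose t (by simp [parts] at hP; omega)
  calc niceCopyCount _ _ G
      ≤ (parts.biUnion copies).card := by
        rw [niceCopyCount, ← Nat.card_eq_finsetCard]
        exact Nat.card_le_card_of_injective (fun A ↦ ⟨A, hmem A A.2⟩)
          fun A B h ↦ Subtype.ext (congrArg Subtype.val h :)
    _ ≤ parts.card * (t' - 1).choose t := Finset.card_biUnion_le_card_mul _ _ _ hcopies
    _ ≤ (t' - 1).choose t * (Fintype.card V).choose s := by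
        rw [mul_comm]
        gcongr
        exact (Finset.card_filter_le _ _).trans (by simp)

/-- For `2 < t < t'`, `ex_re(n,K_{2,t},K_{2,t'}) ≤ C(t'-1,t)·C(n,2)`; in particular, if two
vertices `u,v` of a graph `G` have at least `t'` common neighbors, then every copy of
`K_{2,t}` with `{u,v}` as its smaller part aligns with a copy of `K_{2,t'}`. -/
theorem exRe_K2t (t t' : ℕ) (ht : 2 < t) (htt' : t < t') :
    (∀ n : ℕ, exRe n (completeBipartiteGraph (Fin 2) (Fin t))
        (completeBipartiteGraph (Fin 2) (Fin t'))
      ≤ Nat.choose (t' - 1) t * Nat.choose n 2) ∧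
    (∀ (V : Type*) (G : SimpleGraph V) (u v : V),
      t' ≤ (G.neighborSet u ∩ G.neighborSet v).ncard →
      ∀ A : G.Subgraph, A.IsCopyOf (completeBipartiteGraph (Fin 2) (Fin t)) →
        u ∈ A.verts → v ∈ A.verts →
        (∀ w ∈ A.verts, w ≠ u → w ≠ v → A.Adj u w ∧ A.Adj v w) →
        ∃ B : G.Subgraph, B.IsCopyOf (completeBipartiteGraph (Fin 2) (Fin t')) ∧
          A.Aligns B) := by
  refine ⟨fun n ↦ csSup_le ⟨_, ⊥, rfl⟩ ?_, fun V G u v hcn A hA hu hv hadj ↦ ?_⟩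
  · rintro _ ⟨G, rfl⟩
    simpa using niceCopyCount_completeBipartiteGraph_le htt' G
  · exact exists_isCopyOf_aligns_of_le_ncard_commonNeighbors ht.le htt'.le hcn hA hu hv hadj
end
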